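/- arXiv:2605.28408 — 2 statements merged into one kernel-verified Lean document; each statement's English description precedes it below -/
import Mathlib

section
/- Induction principle for powers of k: let M satisfy the base axioms, let P : M → Prop, and suppose M satisfies the comprehension principle for the predicate d ↦ ¬P(d). If P(1) holds and, for every d with P_k(d), P(d) implies P(k•d), then P(d) holds for every d with P_k(d). -/
/-!
Argue by contradiction. If `P` fails at some power `d` of `k`, comprehension for `¬ P` at the
power `k • d` yields an `x < k • d` whose digit at a power `d' < k • d` is `1` exactly when
`P d'` fails. Since `V x` is the position of the lowest nonzero digit of `x`, the power `V x` is
the least power at which `P` fails. It is not `1`, so the axiom (Mod) shows it is `k • z` for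
a smaller power `z`; then `P z` holds, and the induction step gives `P (V x)`.
-/

/-- The base axioms for a Büchi-arithmetic-like structure `M` with distinguished
element `one` and function `V`, over the base `k`. -/
structure BuchiAxioms (k : ℕ) (M : Type*) [AddCancelCommMonoid M] [LinearOrder M]
    (one : M) (V : M → M) : Prop where
  transl : ∀ x y z : M, x ≤ y ↔ x + z ≤ y + z
  one_pos : (0 : M) < one
  discrete : ∀ x y : M, x < y → x + one ≤ y
  ord0 : ∀ x : M, 0 ≤ x
  ord1 : ∀ x y : M, x ≤ y ↔ ∃ z ≤ y, z + x = y
  mod : ∀ x : M, ∃ a : ℕ, a < k ∧ ∃ z : M, x = a • one + k • z ∨ a • one = x + k • z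
  v0 : V 0 = 0 ∧ V one = one
  v1 : (∀ x : M, V (k • x) = k • V x) ∧
    ∀ (d : M) (a : ℕ), (0 < d ∧ V d = d) → 1 ≤ a → a < k → V (a • d) = d
  v2 : ∀ x y : M, 0 < x → 0 < y → V x < V y → V (x + y) = V x
  v3 : ∀ x : M, 0 < x → ∃ y ≤ x, ∃ a : ℕ, 1 ≤ a ∧ a < k ∧
    x = y + a • V x ∧ (V x < V y ∨ y = 0)
  v4 : ∀ x : M, 0 < x → ∃ d : M, (0 < d ∧ V d = d) ∧ d ≤ x ∧ x < k • d
  v5 : ∀ x : M, V (V x) = V x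

/-- `(x)_d = a` : the digit of `x` at position `d` (a power of `k`) equals `a`. -/
def DigitEq {M : Type*} [AddCancelCommMonoid M] [LinearOrder M]
    (V : M → M) (x d : M) (a : ℕ) : Prop :=
  (0 < d ∧ V d = d) ∧ ∃ y < d, ∃ z ≤ x, x = y + a • d + z ∧ (z = 0 ∨ d < V z)

/-- The comprehension principle for a predicate `P` on `M`. -/
def Comprehension {M : Type*} [AddCancelCommMonoid M] [LinearOrder M]
    (V : M → M) (P : M → Prop) : Prop :=
  ∀ d : M, (0 < d ∧ V d = d) → ∃ x < d, ∀ d' < d, (0 < d' ∧ V d' = d') →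
    (DigitEq V x d' 1 ∧ P d') ∨ (DigitEq V x d' 0 ∧ ¬ P d')

namespace BuchiAxioms

variable {k : ℕ} {M : Type*} [AddCancelCommMonoid M] [LinearOrder M] {one : M} {V : M → M}

theorem isOrderedCancelAddMonoid (H : BuchiAxioms k M one V) : IsOrderedCancelAddMonoid M where
  add_le_add_left a b h c := (H.transl a b c).1 h
  le_of_add_le_add_left a b c h := by
    rw [add_comm a b, add_comm a c] at h
    exact (H.transl b c a).2 h

theorem canonicallyOrderedAdd (H : BuchiAxioms k M one V) : CanonicallyOrderedAdd M where
  exists_add_of_le {a b} h := by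
    obtain ⟨c, -, hc⟩ := (H.ord1 a b).1 h
    exact ⟨c, by rw [← hc, add_comm]⟩
  le_add_self a b := by simpa using (H.transl 0 b a).1 (H.ord0 b)
  le_self_add a b := by simpa [add_comm a] using (H.transl 0 b a).1 (H.ord0 b)

theorem le_of_digitEq [IsOrderedCancelAddMonoid M] [CanonicallyOrderedAdd M] {x d : M} {a : ℕ}
    (h : DigitEq V x d a) (ha : a ≠ 0) : d ≤ x := by
  obtain ⟨-, y, -, z, -, rfl, -⟩ := h
  calc d = 1 • d := (one_nsmul d).symm
    _ ≤ a • d := nsmul_le_nsmul_left zero_le (Nat.one_le_iff_ne_zero.2 ha)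
    _ ≤ y + a • d + z := le_add_self.trans le_self_add

section

variable (H : BuchiAxioms k M one V)
include H

theorem one_le_of_pos {x : M} (hx : 0 < x) : one ≤ x := by
  simpa using H.discrete 0 x hx

theorem V_pos {x : M} (hx : 0 < x) : 0 < V x := by
  refine (H.ord0 _).lt_of_ne fun hV => ?_
  obtain ⟨y, -, a, -, -, hxy, hy⟩ := H.v3 x hx
  rw [← hV, smul_zero, add_zero] at hxy
  subst hxy
  rcases hy with hy | rfl
  · exact hy.false
  · exact hx.false

theorem isPow_V {x : M} (hx : 0 < x) : 0 < V x ∧ V (V x) = V x :=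
  ⟨H.V_pos hx, H.v5 x⟩

theorem eq_one_of_eq_nsmul_one {e : M} {a : ℕ} (he : 0 < e ∧ V e = e) (hak : a < k)
    (h : e = a • one) : e = one := by
  rcases Nat.eq_zero_or_pos a with rfl | ha
  · exact absurd (h.trans (zero_nsmul one)) he.1.ne'
  · rw [← he.2, h, H.v1.2 one a ⟨H.one_pos, H.v0.2⟩ ha hak]

variable [IsOrderedCancelAddMonoid M] [CanonicallyOrderedAdd M]

theorem V_le_self (x : M) : V x ≤ x := by
  rcases eq_zero_or_pos (a := x) with rfl | hx
  · exact H.v0.1.le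
  · obtain ⟨y, -, a, ha, -, hxy, -⟩ := H.v3 x hx
    calc V x = 1 • V x := (one_nsmul _).symm
      _ ≤ a • V x := nsmul_le_nsmul_left zero_le ha
      _ ≤ y + a • V x := le_add_self
      _ = x := hxy.symm

theorem V_add_of_lt_V {y w : M} (hy : 0 < y) (hw : 0 < w) (h : y < V w) :
    V (y + w) = V y :=
  H.v2 y w hy hw ((H.V_le_self y).trans_lt h)

theorem V_nsmul_add {d z : M} {a : ℕ} (hd : 0 < d ∧ V d = d) (ha : a ≠ 0) (hak : a < k)
    (hz : z = 0 ∨ d < V z) : V (a • d + z) = d := by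
  have hVa : V (a • d) = d := H.v1.2 d a hd (Nat.one_le_iff_ne_zero.2 ha) hak
  rcases hz with rfl | hz
  · rw [add_zero, hVa]
  · have hz0 : 0 < z := pos_iff_ne_zero.2 fun h => by
      rw [h, H.v0.1] at hz
      exact (hd.1.trans hz).false
    rw [H.v2 _ _ (nsmul_pos hd.1 ha) hz0 (by rwa [hVa]), hVa]

theorem digitEq_eq_zero_of_lt_V {x d : M} {a : ℕ} (h : DigitEq V x d a) (hak : a < k)
    (hd : d < V x) : a = 0 := by
  by_contra ha
  obtain ⟨hdpow, y, hy, z, -, rfl, hz⟩ := h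
  have hw : V (a • d + z) = d := H.V_nsmul_add hdpow ha hak hz
  rw [add_assoc] at hd
  rcases eq_zero_or_pos (a := y) with rfl | hy0
  · rw [zero_add, hw] at hd
    exact hd.false
  · have hw0 : 0 < a • d + z := (nsmul_pos hdpow.1 ha).trans_le le_self_add
    rw [H.V_add_of_lt_V hy0 hw0 (hw.symm ▸ hy)] at hd
    exact ((H.V_le_self y).trans_lt (hy.trans hd)).false

theorem not_digitEq_V_self_zero {x : M} (hx : 0 < x) : ¬ DigitEq V x (V x) 0 := by
  rintro ⟨-, y, hy, z, -, hxyz, hz⟩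
  rw [zero_nsmul, add_zero] at hxyz
  subst hxyz
  rcases hz with rfl | hz
  · rw [add_zero] at hy
    exact (hy.trans_le (H.V_le_self y)).false
  rcases eq_zero_or_pos (a := y) with rfl | hy0
  · rw [zero_add] at hz
    exact hz.false
  · have hz0 : 0 < z := pos_iff_ne_zero.2 fun h => by
      rw [h, H.v0.1] at hz
      exact (hz.trans_le zero_le).false
    rw [H.V_add_of_lt_V hy0 hz0 (hy.trans hz)] at hy
    exact (hy.trans_le (H.V_le_self y)).false

theorem exists_least_power_of_comprehension (hk : 2 ≤ k) {Q : M → Prop}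
    (hC : Comprehension V Q) {d : M} (hd : 0 < d ∧ V d = d) (hQd : Q d) :
    ∃ e, (0 < e ∧ V e = e) ∧ Q e ∧ ∀ d' < e, (0 < d' ∧ V d' = d') → ¬ Q d' := by
  obtain ⟨x, hxk, hx⟩ := hC (k • d) ⟨nsmul_pos hd.1 (by omega), by rw [H.v1.1, hd.2]⟩
  have hx0 : 0 < x := by
    rcases hx d (lt_smul_of_one_lt_left hd.1 hk) hd with ⟨h1, -⟩ | ⟨-, hQ⟩
    · exact hd.1.trans_le (le_of_digitEq h1 one_ne_zero)
    · exact absurd hQd hQ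
  have hVxk : V x < k • d := (H.V_le_self x).trans_lt hxk
  refine ⟨V x, H.isPow_V hx0, ?_, fun d' hd'x hd' => ?_⟩
  · rcases hx (V x) hVxk (H.isPow_V hx0) with ⟨-, hQ⟩ | ⟨h0, -⟩
    · exact hQ
    · exact absurd h0 (H.not_digitEq_V_self_zero hx0)
  · rcases hx d' (hd'x.trans hVxk) hd' with ⟨h1, -⟩ | ⟨-, hQ⟩
    · exact absurd (H.digitEq_eq_zero_of_lt_V h1 (by omega) hd'x) one_ne_zero
    · exact hQ

theorem exists_eq_nsmul_of_ne_one (hk : 2 ≤ k) {e : M} (he : 0 < e ∧ V e = e) (he1 : e ≠ one) :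
    ∃ z, (0 < z ∧ V z = z) ∧ e = k • z := by
  -- `a` is the last digit of `e`; if it is nonzero, then `V e = one`.
  obtain ⟨a, hak, z, h | h⟩ := H.mod e
  · rcases Nat.eq_zero_or_pos a with rfl | ha
    · rw [zero_nsmul, zero_add] at h
      have hz : 0 < z := pos_iff_ne_zero.2 fun hz => he.1.ne' (by rw [h, hz, smul_zero])
      refine ⟨z, ⟨hz, (nsmul_right_inj (by omega : k ≠ 0)).1 ?_⟩, h⟩
      rw [← H.v1.1, ← h, he.2]
    · refine absurd ?_ he1
      rcases eq_zero_or_pos (a := z) with rfl | hz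
      · exact H.eq_one_of_eq_nsmul_one he hak (by rw [h, smul_zero, add_zero])
      · have hVkz : one < V (k • z) := by
          rw [H.v1.1]
          exact (H.one_le_of_pos (H.V_pos hz)).trans_lt (lt_smul_of_one_lt_left (H.V_pos hz) hk)
        rw [← he.2, h, H.V_nsmul_add ⟨H.one_pos, H.v0.2⟩ ha.ne' hak (Or.inr hVkz)]
  · rcases eq_zero_or_pos (a := z) with rfl | hz
    · rw [smul_zero, add_zero] at h
      exact absurd (H.eq_one_of_eq_nsmul_one he hak h.symm) he1
    · have : k • one ≤ a • one := by
        rw [h]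
        exact (nsmul_le_nsmul_right (H.one_le_of_pos hz) k).trans le_add_self
      exact absurd (nsmul_lt_nsmul_left H.one_pos hak) this.not_gt

end

end BuchiAxioms

/-- Induction principle for powers of `k`. -/
theorem stmt10 (k : ℕ) (hk : 2 ≤ k) (M : Type*) [AddCancelCommMonoid M] [LinearOrder M]
    (one : M) (V : M → M) (H : BuchiAxioms k M one V)
    (P : M → Prop) (hC : Comprehension V (fun d => ¬ P d))
    (h1 : P one) (hstep : ∀ d : M, (0 < d ∧ V d = d) → P d → P (k • d)) :
    ∀ d : M, (0 < d ∧ V d = d) → P d := by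
  have := H.isOrderedCancelAddMonoid
  have := H.canonicallyOrderedAdd
  intro d hd
  by_contra hPd
  obtain ⟨e, he, hPe, hmin⟩ := H.exists_least_power_of_comprehension hk hC hd hPd
  obtain ⟨z, hz, rfl⟩ := H.exists_eq_nsmul_of_ne_one hk he fun h => hPe (h ▸ h1)
  have hzP : P z := not_not.1 (hmin z (lt_smul_of_one_lt_left hz.1 hk) hz)
  exact hPe (hstep z hz hzP)
end

section
/- Let A_≤ be the automaton over Σ_k^2 with states {q₀, q₁}, initial state q₀, and transitions: (q₀, (a, b), q₀) whenever a ≤ b; (q₀, (a, b), q₁) whenever a > b; (q₁, (a, b), q₁) whenever a ≥ b; (q₁, (a, b), q₀) whenever a < b. Then for all x, y, n ∈ ℕ: x mod k^n ≤ y mod k^n if and only if W_{A_≤,q₀}(x, y, n); and x mod k^n > y mod k^n if and only if W_{A_≤,q₁}(x, y, n). -/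
/-- The `i`-th base-`k` digit of `x`. -/
def digit (k x i : ℕ) : ℕ := x / k ^ i % k

/-- A finite automaton over the alphabet `Σ_k^m = (Fin k)^m`. -/
structure FA (k m : ℕ) where
  Q : Type
  fin : Finite Q
  q0 : Q
  acc : Set Q
  δ : Set (Q × (Fin m → Fin k) × Q)

/-- The run predicate `W_{A,q₁}(x⃗, n)`: the automaton `A` can reach state `q₁`
after reading the first `n` base-`k` digits of `x⃗`, the run being encoded by a
family `(w_q)` of natural numbers. -/
def FA.W {k m : ℕ} (A : FA k m) (q1 : A.Q) (x : Fin m → ℕ) (n : ℕ) : Prop :=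
  ∃ w : A.Q → ℕ,
    (∀ q, w q < k ^ (n + 1)) ∧
    (∀ i ≤ n, ∃ q, digit k (w q) i = 1 ∧ ∀ q' ≠ q, digit k (w q') i = 0) ∧
    digit k (w A.q0) 0 = 1 ∧ digit k (w q1) n = 1 ∧
    ∀ i < n, ∀ q, digit k (w q) i = 1 →
      ∃ a : Fin m → Fin k, ∃ q', (q, a, q') ∈ A.δ ∧ digit k (w q') (i + 1) = 1 ∧
        ∀ j, digit k (x j) i = (a j : ℕ)

/-- The automaton `A_≤` recognizing `x ≤ y`: states `q₀ = 0` and `q₁ = 1`, with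
transitions `(q₀,(a,b),q₀)` if `a ≤ b`, `(q₀,(a,b),q₁)` if `a > b`,
`(q₁,(a,b),q₁)` if `a ≥ b`, and `(q₁,(a,b),q₀)` if `a < b`. -/
def ALe (k : ℕ) : FA k 2 where
  Q := Fin 2
  fin := inferInstance
  q0 := 0
  acc := {0}
  δ := {t | (t.1 = 0 ∧ (t.2.1 0 : ℕ) ≤ (t.2.1 1 : ℕ) ∧ t.2.2 = 0) ∨
            (t.1 = 0 ∧ (t.2.1 1 : ℕ) < (t.2.1 0 : ℕ) ∧ t.2.2 = 1) ∨
            (t.1 = 1 ∧ (t.2.1 1 : ℕ) ≤ (t.2.1 0 : ℕ) ∧ t.2.2 = 1) ∨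
            (t.1 = 1 ∧ (t.2.1 0 : ℕ) < (t.2.1 1 : ℕ) ∧ t.2.2 = 0)}

/-! `A_≤` is deterministic, so `W_{A,q}(x⃗, n)` holds exactly when `q` is the state its unique
run reaches after reading the `n` lowest digits; conversely any run is encoded by the numbers
`w_q` whose digit `i` is `1` exactly when the run is in `q` at time `i`. Reading digit `i` of `x`
and `y` prepends it as the new leading digit of `x mod k^i` and `y mod k^i`, and the comparison of
the longer residues is decided by the new digits unless they tie, in which case the old comparison
stands. This is the transition rule of `A_≤`, so by induction the run is in `q₀` after `i` steps
exactly when `x mod k^i ≤ y mod k^i`. -/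

lemma digit_ofDigits {k : ℕ} (hk : 0 < k) {l : List ℕ} (hl : ∀ d ∈ l, d < k) (i : ℕ) :
    digit k (Nat.ofDigits k l) i = l.getD i 0 := by
  rw [digit, Nat.ofDigits_div_pow_eq_ofDigits_drop i hk l hl, Nat.ofDigits_mod_eq_head!]
  induction l generalizing i with
  | nil => simp
  | cons d l ih =>
    cases i with
    | zero => simpa using Nat.mod_eq_of_lt (hl d (by simp))
    | succ i => simpa using ih (fun d hd => hl d (by simp [hd])) i

lemma mod_pow_succ_eq_add_digit (k x i : ℕ) :
    x % k ^ (i + 1) = x % k ^ i + k ^ i * digit k x i := by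
  rw [pow_succ, Nat.mod_mul, digit]

lemma add_mul_le_add_mul_iff {c u v a b : ℕ} (hu : u < c) (hv : v < c) :
    u + c * a ≤ v + c * b ↔ a < b ∨ a = b ∧ u ≤ v := by
  rcases lt_trichotomy a b with h | rfl | h
  · have : c * (a + 1) ≤ c * b := Nat.mul_le_mul_left c h
    exact iff_of_true (by linarith [mul_add_one c a]) (Or.inl h)
  · simp
  · have : c * (b + 1) ≤ c * a := Nat.mul_le_mul_left c h
    exact iff_of_false (by linarith [mul_add_one c b]) (by omega)

def runCode {Q : Type*} [DecidableEq Q] (k : ℕ) (s : ℕ → Q) (n : ℕ) (q : Q) : ℕ :=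
  Nat.ofDigits k ((List.range (n + 1)).map fun i => if s i = q then 1 else 0)

lemma runCode_lt {Q : Type*} [DecidableEq Q] {k : ℕ} (hk : 1 < k) (s : ℕ → Q) (n : ℕ) (q : Q) :
    runCode k s n q < k ^ (n + 1) := by
  simpa [runCode] using Nat.ofDigits_lt_base_pow_length (l := (List.range (n + 1)).map
    fun i => if s i = q then 1 else 0) hk (by simp; intro i _; split_ifs <;> omega)

lemma digit_runCode {Q : Type*} [DecidableEq Q] {k : ℕ} (hk : 1 < k) (s : ℕ → Q) (q : Q)
    {i n : ℕ} (hi : i ≤ n) : digit k (runCode k s n q) i = if s i = q then 1 else 0 := by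
  rw [runCode, digit_ofDigits (by omega) (by simp; intro i _; split_ifs <;> omega)]
  simp [List.getD_eq_getElem?_getD, Nat.lt_succ_of_le hi]

namespace FA

variable {k m : ℕ} (A : FA k m)

def detRun (f : A.Q → (Fin m → ℕ) → A.Q) (x : Fin m → ℕ) : ℕ → A.Q
  | 0 => A.q0
  | i + 1 => f (detRun f x i) fun j => digit k (x j) i

theorem W_of_run (hk : 1 < k) (s : ℕ → A.Q) (x : Fin m → ℕ) (n : ℕ) (h0 : s 0 = A.q0)
    (hstep : ∀ i < n, ∃ a, (s i, a, s (i + 1)) ∈ A.δ ∧ ∀ j, digit k (x j) i = a j) :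
    A.W (s n) x n := by
  classical
  refine ⟨runCode k s n, runCode_lt hk s n, fun i hi => ⟨s i, ?_, fun q hq => ?_⟩, ?_, ?_,
    fun i hi q hq => ?_⟩
  · simp [digit_runCode hk s _ hi]
  · simp [digit_runCode hk s _ hi, Ne.symm hq]
  · simp [digit_runCode hk s _ (Nat.zero_le n), h0]
  · simp [digit_runCode hk s _ le_rfl]
  · obtain rfl : s i = q := by
      by_contra h
      simp [digit_runCode hk s _ hi.le, h] at hq
    obtain ⟨a, ha, hx⟩ := hstep i hi
    exact ⟨a, s (i + 1), ha, by simp [digit_runCode hk s _ hi], hx⟩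

theorem eq_detRun_of_W (f : A.Q → (Fin m → ℕ) → A.Q)
    (hδ : ∀ q a q', (q, a, q') ∈ A.δ → q' = f q fun j => a j) {q : A.Q} {x : Fin m → ℕ} {n : ℕ}
    (hW : A.W q x n) : q = A.detRun f x n := by
  obtain ⟨w, -, huniq, h0, hn, hstep⟩ := hW
  have hsame : ∀ i ≤ n, ∀ q q', digit k (w q) i = 1 → digit k (w q') i = 1 → q = q' := by
    intro i hi q q' hq hq'
    obtain ⟨p, -, hp⟩ := huniq i hi
    have hp_eq : ∀ q, digit k (w q) i = 1 → q = p := fun q hq =>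
      by_contra fun h => by simp [hp q h] at hq
    exact (hp_eq q hq).trans (hp_eq q' hq').symm
  suffices hrun : ∀ i ≤ n, digit k (w (A.detRun f x i)) i = 1 from
    hsame n le_rfl _ _ hn (hrun n le_rfl)
  intro i hi
  induction i with
  | zero => exact h0
  | succ i ih =>
    obtain ⟨a, q', hmem, hq', ha⟩ := hstep i hi _ (ih (by omega))
    have hnext : q' = A.detRun f x (i + 1) := by
      rw [hδ _ _ _ hmem, detRun]
      simp only [ha]
    rwa [← hnext]

theorem W_iff_eq_detRun (hk : 1 < k) (f : A.Q → (Fin m → ℕ) → A.Q)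
    (hδ : ∀ q a q', (q, a, q') ∈ A.δ ↔ q' = f q fun j => a j) (q : A.Q) (x : Fin m → ℕ)
    (n : ℕ) : A.W q x n ↔ q = A.detRun f x n := by
  refine ⟨A.eq_detRun_of_W f fun q a q' => (hδ q a q').1, ?_⟩
  rintro rfl
  refine A.W_of_run hk _ x n rfl fun i _ => ⟨fun j => ⟨digit k (x j) i, Nat.mod_lt _ (by omega)⟩,
    (hδ _ _ _).2 rfl, fun j => rfl⟩

end FA

def leStep (q : Fin 2) (d : Fin 2 → ℕ) : Fin 2 :=
  if d 0 < d 1 ∨ d 0 = d 1 ∧ q = 0 then 0 else 1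

lemma mem_ALe_δ_iff {k : ℕ} (q : Fin 2) (a : Fin 2 → Fin k) (q' : Fin 2) :
    (q, a, q') ∈ (ALe k).δ ↔ q' = leStep q fun j => a j := by
  show (q = 0 ∧ (a 0 : ℕ) ≤ a 1 ∧ q' = 0) ∨ (q = 0 ∧ (a 1 : ℕ) < a 0 ∧ q' = 1) ∨
    (q = 1 ∧ (a 1 : ℕ) ≤ a 0 ∧ q' = 1) ∨ (q = 1 ∧ (a 0 : ℕ) < a 1 ∧ q' = 0) ↔ _
  fin_cases q <;> fin_cases q' <;> simp [leStep] <;> omega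

lemma detRun_ALe {k : ℕ} (hk : 0 < k) (x y i : ℕ) :
    (ALe k).detRun leStep ![x, y] i = if x % k ^ i ≤ y % k ^ i then (0 : Fin 2) else 1 := by
  induction i with
  | zero => simp [FA.detRun, ALe, Nat.mod_one]
  | succ i ih =>
    have hlt : ∀ z, z % k ^ i < k ^ i := fun z => Nat.mod_lt _ (by positivity)
    show leStep _ _ = _
    rw [ih, mod_pow_succ_eq_add_digit k x, mod_pow_succ_eq_add_digit k y]
    simp only [add_mul_le_add_mul_iff (hlt x) (hlt y), leStep, Matrix.cons_val_zero,
      Matrix.cons_val_one]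
    by_cases h : x % k ^ i ≤ y % k ^ i <;> simp [h]

/-- `A_≤` compares residues modulo `k^n`: state `q₀` is reached iff
`x mod k^n ≤ y mod k^n`, and state `q₁` iff `x mod k^n > y mod k^n`. -/
theorem stmt19 (k : ℕ) (hk : 2 ≤ k) :
    ∀ x y n : ℕ,
      (x % k ^ n ≤ y % k ^ n ↔ (ALe k).W (0 : Fin 2) ![x, y] n) ∧
      (y % k ^ n < x % k ^ n ↔ (ALe k).W (1 : Fin 2) ![x, y] n) := by
  intro x y n
  have hW (q : Fin 2) : (ALe k).W q ![x, y] n ↔ q = if x % k ^ n ≤ y % k ^ n then 0 else 1 :=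
    detRun_ALe (by omega : 0 < k) x y n ▸
      (ALe k).W_iff_eq_detRun hk leStep mem_ALe_δ_iff q ![x, y] n
  rw [hW, hW]
  split_ifs <;> simp_all
end
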